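/- arXiv:1507.02630 — 3 statements merged into one kernel-verified Lean document; each statement's English description precedes it below -/
import Mathlib

section
/- Every decomposable configuration in ℂ^m (m ≥ 1) is semistable. -/
/-!
Mass is linear in the configuration, and a basis `B` of `ℂ^m` gives mass `#(B ∩ V) ≤ dim V` to a
subspace `V` and total mass `m`. Hence `w = ∑ cₜ 1_{Bₜ}` has `w(V) ≤ (∑ cₜ) dim V = dim V · d(w) / m`.
-/

open scoped Classical

/-- The mass of a configuration `w` on a complex linear subspace `V` of `ℂ^m`. -/
noncomputable def massOn (m : ℕ) (w : (Fin m → ℂ) →₀ ℚ)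
    (V : Submodule ℂ (Fin m → ℂ)) : ℚ :=
  ∑ v ∈ w.support.filter (fun v => v ∈ V), w v

/-- The total mass of a configuration. -/
noncomputable def totalMass (m : ℕ) (w : (Fin m → ℂ) →₀ ℚ) : ℚ :=
  ∑ v ∈ w.support, w v

/-- A configuration: a finitely supported function `w : ℂ^m → ℚ` with
nonnegative values and `w 0 = 0`. -/
def IsConfiguration (m : ℕ) (w : (Fin m → ℂ) →₀ ℚ) : Prop :=
  (∀ v, 0 ≤ w v) ∧ w 0 = 0

/-- Semistability: every subspace of dimension `k` has mass at most `k·d/m`. -/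
noncomputable def Semistable (m : ℕ) (w : (Fin m → ℂ) →₀ ℚ) : Prop :=
  ∀ V : Submodule ℂ (Fin m → ℂ),
    massOn m w V ≤ (Module.finrank ℂ V : ℚ) * totalMass m w / (m : ℚ)

/-- Decomposability: `w` is a finite nonnegative rational combination of indicator
functions of bases of `ℂ^m` (each a set of `m` linearly independent vectors). -/
def Decomposable (m : ℕ) (w : (Fin m → ℂ) →₀ ℚ) : Prop :=
  ∃ (r : ℕ) (c : Fin r → ℚ) (B : Fin r → Finset (Fin m → ℂ)),
    (∀ t, 0 ≤ c t) ∧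
    (∀ t, (B t).card = m ∧
      LinearIndependent ℂ (fun v : (B t : Set (Fin m → ℂ)) => (v : Fin m → ℂ))) ∧
    (∀ v, w v = ∑ t, c t * (if v ∈ B t then 1 else 0))

open Finset Module

theorem card_filter_mem_le_finrank {R M : Type*} [Ring R] [StrongRankCondition R]
    [AddCommGroup M] [Module R M] {s : Finset M} (hs : LinearIndepOn R id (s : Set M))
    (V : Submodule R M) [Module.Finite R V] :
    #{v ∈ s | v ∈ V} ≤ finrank R V := by
  rw [← finrank_span_finset_eq_card (hs.mono fun v hv => by simp_all)]
  exact Submodule.finrank_mono (Submodule.span_le.2 fun v hv => by simp_all)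

theorem sum_filter_eq_sum_mul_card {α ι : Type*} [DecidableEq α] [Fintype ι] {f : α → ℚ}
    {c : ι → ℚ} {B : ι → Finset α} (hf : ∀ v, f v = ∑ t, c t * if v ∈ B t then 1 else 0)
    (p : α → Prop) [DecidablePred p] :
    ∑ v ∈ univ.biUnion B with p v, f v = ∑ t, c t * #{v ∈ B t | p v} := by
  simp_rw [hf, sum_comm (s := filter p _), ← mul_sum, sum_boole]
  refine sum_congr rfl fun t _ => ?_
  congr 3
  ext v
  simp only [mem_filter, mem_biUnion, mem_univ, true_and]
  exact ⟨fun h => ⟨h.2, h.1.2⟩, fun h => ⟨⟨⟨t, h.1⟩, h.2⟩, h.1⟩⟩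

theorem support_subset_biUnion {α ι : Type*} [DecidableEq α] [Fintype ι] {w : α →₀ ℚ}
    {c : ι → ℚ} {B : ι → Finset α} (hw : ∀ v, w v = ∑ t, c t * if v ∈ B t then 1 else 0) :
    w.support ⊆ univ.biUnion B := by
  intro v hv
  by_contra h
  simp_all

theorem massOn_eq_sum_mul_card {m r : ℕ} {w : (Fin m → ℂ) →₀ ℚ} {c : Fin r → ℚ}
    {B : Fin r → Finset (Fin m → ℂ)} (hw : ∀ v, w v = ∑ t, c t * if v ∈ B t then 1 else 0)
    (V : Submodule ℂ (Fin m → ℂ)) :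
    massOn m w V = ∑ t, c t * #{v ∈ B t | v ∈ V} := by
  rw [massOn, ← sum_filter_eq_sum_mul_card hw]
  exact sum_subset (filter_subset_filter _ (support_subset_biUnion hw)) (by simp_all)

theorem totalMass_eq_massOn_top (m : ℕ) (w : (Fin m → ℂ) →₀ ℚ) :
    totalMass m w = massOn m w ⊤ := by
  simp [totalMass, massOn]

theorem decomposable_imp_semistable_general (m : ℕ) (hm : 1 ≤ m)
    (w : (Fin m → ℂ) →₀ ℚ) (hdec : Decomposable m w) :
    Semistable m w := by
  obtain ⟨r, c, B, hc, hB, hw⟩ := hdec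
  intro V
  have htotal : totalMass m w = (∑ t, c t) * m := by
    simp [totalMass_eq_massOn_top, massOn_eq_sum_mul_card hw, (hB _).1, sum_mul]
  calc massOn m w V = ∑ t, c t * #{v ∈ B t | v ∈ V} := massOn_eq_sum_mul_card hw V
    _ ≤ ∑ t, c t * finrank ℂ V := by
      gcongr with t
      · exact hc t
      · exact_mod_cast card_filter_mem_le_finrank (hB t).2 V
    _ = finrank ℂ V * totalMass m w / m := by
      rw [htotal, ← sum_mul]
      field_simp

/-- Every decomposable configuration in `ℂ^m` (`m ≥ 1`) is semistable. -/
theorem decomposable_imp_semistable (m : ℕ) (hm : 1 ≤ m)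
    (w : (Fin m → ℂ) →₀ ℚ) (hw : IsConfiguration m w) (hdec : Decomposable m w) :
    Semistable m w :=
  decomposable_imp_semistable_general m hm w hdec
end

section
/- Let m ≥ 2 and let w be a stable configuration in ℂ^m of positive total mass. Then there exist vectors v₁,…,v_m in the support of w that are linearly independent but not pairwise orthogonal, i.e., ⟨v_a, v_b⟩ ≠ 0 for some a ≠ b (standard Hermitian inner product on ℂ^m). -/
open scoped Classical

/-- Stability: semistable, and strict inequality for every proper nontrivial subspace. -/
noncomputable def Stable (m : ℕ) (w : (Fin m → ℂ) →₀ ℚ) : Prop :=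
  Semistable m w ∧
  ∀ V : Submodule ℂ (Fin m → ℂ), 0 < Module.finrank ℂ V → Module.finrank ℂ V < m →
    massOn m w V < (Module.finrank ℂ V : ℚ) * totalMass m w / (m : ℚ)

/-!
Suppose every `m` linearly independent support vectors are pairwise orthogonal. Semistability
forces the support to span `ℂ^m`, so any two independent support vectors `u, x` extend, inside the
support, to `m` independent ones; hence `x ⊥ u`. The support then lies in `ℂ u ∪ u^⊥`, whose masses
are `< d/m` (stability) and `≤ (m - 1) d/m` (semistability), and together they cannot carry `d`.
-/

open Module Submodule Matrix

theorem exists_linearIndependent_fin_extension {K V : Type*} [DivisionRing K] [AddCommGroup V]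
    [Module K V] [FiniteDimensional K V] {n : ℕ} (hn : finrank K V = n) {s S : Set V}
    (hs : LinearIndepOn K id s) (hsS : s ⊆ S) (hS : span K S = ⊤) :
    ∃ v : Fin n → V, (∀ i, v i ∈ S) ∧ LinearIndependent K v ∧ s ⊆ Set.range v := by
  obtain ⟨b, hbS, hsb, hSb, hb⟩ := exists_linearIndepOn_id_extension hs hsS
  let B : Basis b K V := .mk hb.linearIndependent (by
    rw [← hS, Set.range_comp' id, Subtype.range_coe, Set.image_id]
    exact span_le.2 hSb)
  let e := B.indexEquiv (finBasisOfFinrankEq K V hn)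
  exact ⟨fun i => e.symm i, fun i => hbS (e.symm i).2,
    hb.linearIndependent.comp _ e.symm.injective, fun x hx => ⟨e ⟨x, hsb hx⟩, by simp⟩⟩

section Mass

variable {m : ℕ} {w : (Fin m → ℂ) →₀ ℚ}

theorem massOn_eq_totalMass_of_support_subset {V : Submodule ℂ (Fin m → ℂ)}
    (h : (w.support : Set (Fin m → ℂ)) ⊆ V) : massOn m w V = totalMass m w := by
  rw [massOn, totalMass, Finset.sum_filter]
  exact Finset.sum_congr rfl fun v hv => if_pos (h hv)

theorem totalMass_nonneg (hw : ∀ v, 0 ≤ w v) : 0 ≤ totalMass m w :=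
  Finset.sum_nonneg fun v _ => hw v

theorem totalMass_le_massOn_add_massOn (hw : ∀ v, 0 ≤ w v) {V W : Submodule ℂ (Fin m → ℂ)}
    (h : (w.support : Set (Fin m → ℂ)) ⊆ V ∪ W) :
    totalMass m w ≤ massOn m w V + massOn m w W := by
  rw [totalMass, ← Finset.sum_filter_add_sum_filter_not w.support (· ∈ V), massOn, massOn]
  refine add_le_add le_rfl
    (Finset.sum_le_sum_of_subset_of_nonneg (fun x hx => ?_) fun _ _ _ => hw _)
  simp only [Finset.mem_filter] at hx ⊢
  exact ⟨hx.1, (h hx.1).resolve_left hx.2⟩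

theorem Semistable.span_support_eq_top (hss : Semistable m w) (hpos : 0 < totalMass m w) :
    span ℂ (w.support : Set (Fin m → ℂ)) = ⊤ := by
  set T := span ℂ (w.support : Set (Fin m → ℂ))
  have hT := hss T
  rw [massOn_eq_totalMass_of_support_subset subset_span] at hT
  refine eq_top_of_finrank_eq (le_antisymm (finrank_le T) ?_)
  rw [finrank_fin_fun]
  by_contra! hlt
  have hm : (0 : ℚ) < m := by exact_mod_cast (Nat.zero_le _).trans_lt hlt
  have hlt' : (finrank ℂ T : ℚ) < m := by exact_mod_cast hlt
  rw [le_div_iff₀ hm] at hT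
  nlinarith

theorem Semistable.support_not_subset_union (hss : Semistable m w) (hw : ∀ v, 0 ≤ w v)
    {V W : Submodule ℂ (Fin m → ℂ)}
    (hV : massOn m w V < finrank ℂ V * totalMass m w / m) (hVW : finrank ℂ V + finrank ℂ W ≤ m) :
    ¬ (w.support : Set (Fin m → ℂ)) ⊆ V ∪ W := by
  intro h
  have hd := totalMass_nonneg hw
  have hsum : ((finrank ℂ V : ℚ) + finrank ℂ W) * totalMass m w / m ≤ totalMass m w :=
    div_le_of_le_mul₀ (Nat.cast_nonneg m) hd
      (by rw [mul_comm (totalMass m w)]; gcongr; exact_mod_cast hVW)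
  have := totalMass_le_massOn_add_massOn hw h
  have := hss W
  rw [add_mul, add_div] at hsum
  linarith

end Mass

theorem mem_span_singleton_or_dotProduct_star_eq_zero {K : Type*} [Field K] [Star K] {m : ℕ}
    {S : Set (Fin m → K)} (hS : span K S = ⊤)
    (horth : ∀ v : Fin m → Fin m → K, (∀ i, v i ∈ S) → LinearIndependent K v →
      ∀ a b, a ≠ b → v a ⬝ᵥ star (v b) = 0)
    {u x : Fin m → K} (hu : u ∈ S) (hu0 : u ≠ 0) (hx : x ∈ S) :
    x ∈ K ∙ u ∨ x ⬝ᵥ star u = 0 := by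
  refine or_iff_not_imp_left.2 fun hxu => ?_
  have hpair : LinearIndepOn K id {u, x} :=
    linearIndepOn_id_pair hu0 fun a h => hxu (h ▸ mem_span_singleton.2 ⟨a, rfl⟩)
  obtain ⟨v, hvS, hv, hrange⟩ := exists_linearIndependent_fin_extension (finrank_fin_fun K) hpair
    (Set.insert_subset hu (Set.singleton_subset_iff.2 hx)) hS
  obtain ⟨a, rfl⟩ := hrange (Set.mem_insert u {x})
  obtain ⟨b, rfl⟩ := hrange (Set.mem_insert_of_mem _ rfl)
  exact horth v hvS hv b a fun hba => hxu (hba ▸ mem_span_singleton_self _)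

/-- A stable configuration of positive total mass in `ℂ^m` (`m ≥ 2`) has `m`
support vectors that are linearly independent but not pairwise orthogonal. -/
theorem stable_exists_indep_nonorthogonal (m : ℕ) (hm : 2 ≤ m)
    (w : (Fin m → ℂ) →₀ ℚ) (hw : IsConfiguration m w) (hst : Stable m w)
    (hpos : 0 < totalMass m w) :
    ∃ v : Fin m → (Fin m → ℂ), (∀ i, v i ∈ w.support) ∧ LinearIndependent ℂ v ∧
      ∃ a b : Fin m, a ≠ b ∧ (∑ j, (v a) j * (starRingEnd ℂ) ((v b) j)) ≠ 0 := by
  obtain ⟨hnn, hw0⟩ := hw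
  by_contra! horth
  obtain ⟨u, hu⟩ : w.support.Nonempty := Finset.nonempty_of_sum_ne_zero hpos.ne'
  have hu0 : u ≠ 0 := by rintro rfl; simp [hw0] at hu
  let orth := LinearMap.ker ((dotProductBilin ℂ ℂ).flip (star u))
  have hu_notMem : u ∉ orth := by open ComplexOrder in simpa [orth] using hu0
  refine hst.1.support_not_subset_union hnn (V := ℂ ∙ u) (W := orth) ?_ ?_ fun x hx => ?_
  · exact hst.2 _ (by rw [finrank_span_singleton hu0]; norm_num)
      (by rw [finrank_span_singleton hu0]; omega)
  · have : finrank ℂ orth < m := by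
      simpa using finrank_lt (s := orth) fun h => hu_notMem (by rw [h]; exact mem_top)
    rw [finrank_span_singleton hu0]
    omega
  · exact mem_span_singleton_or_dotProduct_star_eq_zero (hst.1.span_support_eq_top hpos) horth hu
      hu0 hx
end

section
/- Let N ≥ 1 and let w be a stable configuration in ℂ^{N+1} all of whose values are nonnegative integers, of total mass d. Let v₁,…,v_{N+1} be linearly independent vectors in the support of w. Then the configuration w′ defined by w′(v_i) = w(v_i) − 1/(N+1)² for i = 1,…,N+1 and w′(v) = w(v) for all other v is a semistable configuration in ℂ^{N+1} (of total mass d − 1/(N+1)). -/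
/-
Subtracting `ε = 1 / m²` at the `m` basis vectors `vᵢ` lowers the total mass by `1 / m` and the mass
of a `k`-dimensional subspace `V` by `s ε`, where `s = #{i | vᵢ ∈ V} ≤ k` by linear independence.
The required bound `w(V) - s ε ≤ k (d - 1 / m) / m` reads `w(V) + (k - s) ε ≤ k d / m`. If `s = k`
this is semistability of `w`. Otherwise `0 < k < m`, and since `w(V)` and `d` are integers, the
strict inequality `m w(V) < k d` given by stability improves to `m w(V) + 1 ≤ k d`; the slack `1 / m`
covers `(k - s) ε ≤ m ε = 1 / m`.
-/

open scoped Classical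

open Finset Finsupp Module

section Mass

variable {m : ℕ}

theorem massOn_eq_sum (w : (Fin m → ℂ) →₀ ℚ) (V : Submodule ℂ (Fin m → ℂ)) :
    massOn m w V = w.sum fun x c => if x ∈ V then c else 0 := by
  rw [massOn, Finset.sum_filter]; rfl

theorem massOn_sub (w u : (Fin m → ℂ) →₀ ℚ) (V : Submodule ℂ (Fin m → ℂ)) :
    massOn m (w - u) V = massOn m w V - massOn m u V := by
  simp only [massOn_eq_sum]
  exact sum_sub_index fun _ _ _ => by split_ifs <;> simp

theorem massOn_sum_single {ι : Type*} (s : Finset ι) (v : ι → Fin m → ℂ) (c : ℚ)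
    (V : Submodule ℂ (Fin m → ℂ)) :
    massOn m (∑ i ∈ s, single (v i) c) V = #{i ∈ s | v i ∈ V} * c := by
  rw [massOn_eq_sum, ← sum_finsetSum_index (fun _ => by simp) fun _ _ _ => by split_ifs <;> simp]
  simp [sum_single_index, Finset.sum_ite]

theorem massOn_top (w : (Fin m → ℂ) →₀ ℚ) : massOn m w ⊤ = totalMass m w := by
  simp [massOn, totalMass]

theorem totalMass_sub (w u : (Fin m → ℂ) →₀ ℚ) :
    totalMass m (w - u) = totalMass m w - totalMass m u := by
  simp only [← massOn_top, massOn_sub]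

theorem exists_massOn_eq_natCast {w : (Fin m → ℂ) →₀ ℚ} (hint : ∀ v, ∃ n : ℕ, w v = n)
    (V : Submodule ℂ (Fin m → ℂ)) : ∃ n : ℕ, massOn m w V = n := by
  choose n hn using hint
  exact ⟨∑ x ∈ w.support with x ∈ V, n x, by simp [massOn, hn]⟩

end Mass

theorem Finsupp.finsetSum_single_apply {ι α M : Type*} [DecidableEq α] [AddCommMonoid M]
    (s : Finset ι) (v : ι → α) (c : M) (x : α) : (∑ i ∈ s, single (v i) c) x = #{i ∈ s | v i = x} • c := by
  simp [finsetSum_apply, single_apply, Finset.sum_ite]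

theorem LinearIndependent.card_filter_mem_le_finrank {ι K E : Type*} [Fintype ι] [Field K]
    [AddCommGroup E] [Module K E] [FiniteDimensional K E] {v : ι → E}
    (hv : LinearIndependent K v) (V : Submodule K E) :
    #{i | v i ∈ V} ≤ finrank K V := by
  have hV : LinearIndependent K fun i : {i // v i ∈ V} => (⟨v i, i.2⟩ : V) :=
    .of_comp V.subtype (hv.comp _ Subtype.val_injective)
  simpa [Fintype.card_subtype] using hV.fintype_card_le_finrank

section SubBasis

variable {m : ℕ} {w : (Fin m → ℂ) →₀ ℚ} {v : Fin m → Fin m → ℂ}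

theorem Stable.mul_massOn_add_one_le (hint : ∀ x, ∃ n : ℕ, w x = n) (hst : Stable m w)
    {V : Submodule ℂ (Fin m → ℂ)} (hk0 : 0 < finrank ℂ V) (hkm : finrank ℂ V < m) :
    m * massOn m w V + 1 ≤ finrank ℂ V * totalMass m w := by
  obtain ⟨M, hM⟩ := exists_massOn_eq_natCast hint V
  obtain ⟨D, hD⟩ := exists_massOn_eq_natCast hint ⊤
  rw [massOn_top] at hD
  have hlt := hst.2 V hk0 hkm
  rw [lt_div_iff₀ (by exact_mod_cast hk0.trans hkm), hM, hD, mul_comm] at hlt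
  rw [hM, hD]
  exact_mod_cast Nat.succ_le_of_lt (by exact_mod_cast hlt)

theorem isConfiguration_sub_sum_single (hw : IsConfiguration m w)
    (hint : ∀ x, ∃ n : ℕ, w x = n) (hsupp : ∀ i, v i ∈ w.support) :
    IsConfiguration m (w - ∑ i, single (v i) (1 / (m : ℚ) ^ 2)) := by
  set u : (Fin m → ℂ) →₀ ℚ := ∑ i, single (v i) (1 / (m : ℚ) ^ 2) with hu
  have key : ∀ x, (w x = 0 → (w - u) x = 0) ∧ 0 ≤ (w - u) x := by
    intro x
    simp only [hu, Finsupp.sub_apply, finsetSum_single_apply, nsmul_eq_mul, mul_one_div]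
    by_cases hx : w x = 0
    · have hcount : #{i | v i = x} = 0 :=
        card_eq_zero.mpr <| filter_eq_empty_iff.mpr fun i _ hi =>
          mem_support_iff.mp (hsupp i) (hi ▸ hx)
      rw [hx, hcount]
      simp
    · obtain ⟨n, hn⟩ := hint x
      have hn1 : (1 : ℚ) ≤ w x := by
        rw [hn] at hx ⊢
        exact_mod_cast Nat.one_le_iff_ne_zero.mpr (by exact_mod_cast hx)
      have hcount : (#{i | v i = x} : ℚ) / (m : ℚ) ^ 2 ≤ 1 := by
        refine div_le_one_of_le₀ ?_ (by positivity)
        exact_mod_cast (card_filter_le _ _).trans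
          ((card_fin m).trans_le (Nat.le_self_pow two_ne_zero m))
      exact ⟨fun h => absurd h hx, by linarith⟩
  exact ⟨fun x => (key x).2, (key 0).1 hw.2⟩

theorem totalMass_sub_sum_single (w : (Fin m → ℂ) →₀ ℚ) (v : Fin m → Fin m → ℂ) :
    totalMass m (w - ∑ i, single (v i) (1 / (m : ℚ) ^ 2)) = totalMass m w - 1 / m := by
  rw [totalMass_sub, ← massOn_top (∑ i, _), massOn_sum_single]
  have hcard : #{i : Fin m | v i ∈ (⊤ : Submodule ℂ (Fin m → ℂ))} = m := by simp
  rw [hcard, mul_one_div, sq, div_self_mul_self', one_div]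

theorem Stable.semistable_sub_sum_single (hint : ∀ x, ∃ n : ℕ, w x = n) (hst : Stable m w)
    (hind : LinearIndependent ℂ v) :
    Semistable m (w - ∑ i, single (v i) (1 / (m : ℚ) ^ 2)) := by
  intro V
  set k := finrank ℂ V
  have hsk : #{i | v i ∈ V} ≤ k := hind.card_filter_mem_le_finrank V
  have hkm : k ≤ m := (Submodule.finrank_le V).trans_eq (by simp)
  rw [massOn_sub, massOn_sum_single, totalMass_sub_sum_single,
    show (k : ℚ) * (totalMass m w - 1 / m) / m = k * totalMass m w / m - k * (1 / (m : ℚ) ^ 2) by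
      ring]
  rcases hsk.eq_or_lt with hsk | hsk
  · rw [hsk]
    linarith [hst.1 V]
  · -- `V` misses some `v i`, so `V ≠ ⊤` and stability applies; integrality turns its strict
    -- inequality into a gap of `1 / m`, which absorbs the deficit `(k - #{i | v i ∈ V}) / m²`.
    have hVm : k < m := hkm.lt_of_ne fun hkm => hsk.ne <| by
      simp [Submodule.eq_top_of_finrank_eq (hkm.trans (finrank_fin_fun ℂ).symm), k, hkm]
    have hgap := hst.mul_massOn_add_one_le hint (pos_of_gt hsk) hVm
    have hks : (k : ℚ) - #{i | v i ∈ V} ≤ m := by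
      linarith [(show (k : ℚ) ≤ m by exact_mod_cast hkm), (#{i | v i ∈ V}).cast_nonneg (α := ℚ)]
    have hm : 0 < m := pos_of_gt hVm
    field_simp
    nlinarith

end SubBasis

theorem stable_sub_basis_semistable_general (N : ℕ)
    (w : (Fin (N+1) → ℂ) →₀ ℚ) (hw : IsConfiguration (N+1) w)
    (hint : ∀ v, ∃ n : ℕ, w v = (n : ℚ))
    (hst : Stable (N+1) w) (d : ℚ) (hd : totalMass (N+1) w = d)
    (v : Fin (N+1) → (Fin (N+1) → ℂ)) (hsupp : ∀ i, v i ∈ w.support)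
    (hind : LinearIndependent ℂ v) :
    IsConfiguration (N+1) (w - ∑ i, Finsupp.single (v i) (1 / ((N:ℚ)+1)^2)) ∧
    Semistable (N+1) (w - ∑ i, Finsupp.single (v i) (1 / ((N:ℚ)+1)^2)) ∧
    totalMass (N+1) (w - ∑ i, Finsupp.single (v i) (1 / ((N:ℚ)+1)^2))
      = d - 1 / ((N:ℚ)+1) := by
  have hcast : (N : ℚ) + 1 = ((N + 1 : ℕ) : ℚ) := by push_cast; rfl
  rw [hcast, ← hd]
  exact ⟨isConfiguration_sub_sum_single hw hint hsupp, hst.semistable_sub_sum_single hint hind,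
    totalMass_sub_sum_single w v⟩

/-- Subtracting `1/(N+1)²` from the weights of `N+1` linearly independent support
vectors of an integral stable configuration in `ℂ^{N+1}` leaves a semistable
configuration, of total mass `d - 1/(N+1)`. -/
theorem stable_sub_basis_semistable (N : ℕ) (hN : 1 ≤ N)
    (w : (Fin (N+1) → ℂ) →₀ ℚ) (hw : IsConfiguration (N+1) w)
    (hint : ∀ v, ∃ n : ℕ, w v = (n : ℚ))
    (hst : Stable (N+1) w) (d : ℚ) (hd : totalMass (N+1) w = d)
    (v : Fin (N+1) → (Fin (N+1) → ℂ)) (hsupp : ∀ i, v i ∈ w.support)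
    (hind : LinearIndependent ℂ v) :
    IsConfiguration (N+1) (w - ∑ i, Finsupp.single (v i) (1 / ((N:ℚ)+1)^2)) ∧
    Semistable (N+1) (w - ∑ i, Finsupp.single (v i) (1 / ((N:ℚ)+1)^2)) ∧
    totalMass (N+1) (w - ∑ i, Finsupp.single (v i) (1 / ((N:ℚ)+1)^2))
      = d - 1 / ((N:ℚ)+1) :=
  stable_sub_basis_semistable_general N w hw hint hst d hd v hsupp hind
end
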